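/- Let n ≥ 1 and 0 ≤ h ≤ t be integers and let α_{i,j} (0 ≤ i ≤ t, 0 ≤ j ≤ min(h,i)) be real coefficients. Then G_h, viewed as a univariate real polynomial in k, has degree at most 2t. -/

import Mathlib

/-!
Write `G_h(k) = Σ_r C(h,r) k^{(r)} (n-k)^{(h-r)} F(r, k-r)` with `F(r,x) = (Σ_j C(r,j) p_j(x))²`.
Expanding the square, `F` is a sum of products of a polynomial of degree `≤ j + j'` in `r` and
one of degree `≤ (t - j) + (t - j')` in `x`; as `j, j' ≤ h ≤ t`, `F` lies in the span of the
`r^{(a)} x^{(b)}` with `a + b ≤ 2t`. Substituting `r = a + s` and applying Chu–Vandermonde, the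
transform `F ↦ G` sends `r^{(a)} x^{(b)}` to `h^{(a)} (n-a-b)^{(h-a)} k^{(a+b)}`, of degree `a + b`.
-/

/-- Falling factorial `x^{(m)} = x(x-1)⋯(x-m+1)`. -/
noncomputable def fallFac (x : ℝ) (m : ℕ) : ℝ := ∏ i ∈ Finset.range m, (x - (i : ℝ))

/-- Generalized binomial coefficient `C(x,i) = x(x-1)⋯(x-i+1)/i!`. -/
noncomputable def genBinom (x : ℝ) (i : ℕ) : ℝ := fallFac x i / (i.factorial : ℝ)

/-- `p_j(x) = Σ_{i=0}^{t-j} α_{i+j,j} C(x,i)`. -/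
noncomputable def pFun (α : ℕ → ℕ → ℝ) (t j : ℕ) (x : ℝ) : ℝ :=
  ∑ i ∈ Finset.range (t - j + 1), α (i + j) j * genBinom x i

/-- `G_h(k) = Σ_{r=0}^h C(h,r) h_r(k) (Σ_{j=0}^h C(r,j) p_j(k-r))²` with
`h_r(k) = k^{(r)} (n-k)^{(h-r)}`. -/
noncomputable def Gfun (n t h : ℕ) (α : ℕ → ℕ → ℝ) (k : ℝ) : ℝ :=
  ∑ r ∈ Finset.range (h + 1),
    (h.choose r : ℝ) * (fallFac k r * fallFac ((n : ℝ) - k) (h - r)) *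
      (∑ j ∈ Finset.range (h + 1), (r.choose j : ℝ) * pFun α t j (k - (r : ℝ))) ^ 2

open Finset Polynomial

lemma fallFac_eq_eval (x : ℝ) (m : ℕ) : fallFac x m = (descPochhammer ℝ m).eval x :=
  (descPochhammer_eval_eq_prod_range m x).symm

lemma fallFac_eq_smeval (x : ℝ) (m : ℕ) : fallFac x m = (descPochhammer ℤ m).smeval x := by
  rw [← aeval_eq_smeval, aeval_def, eval₂_eq_eval_map, descPochhammer_map, fallFac_eq_eval]

lemma fallFac_add_eq_sum_choose (x y : ℝ) (N : ℕ) :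
    fallFac (x + y) N =
      ∑ s ∈ range (N + 1), (N.choose s : ℝ) * (fallFac x s * fallFac y (N - s)) := by
  simp only [fallFac_eq_smeval, Ring.descPochhammer_smeval_add N (Commute.all x y),
    Nat.sum_antidiagonal_eq_sum_range_succ_mk]

lemma fallFac_add (x : ℝ) (a b : ℕ) : fallFac x (a + b) = fallFac x a * fallFac (x - a) b := by
  simp only [fallFac, prod_range_add, Nat.cast_add, sub_sub]

lemma fallFac_natCast (r m : ℕ) : fallFac r m = r.descFactorial m := by
  rw [fallFac_eq_eval, descPochhammer_eval_eq_descFactorial]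

lemma fallFac_natCast_of_lt {r m : ℕ} (h : r < m) : fallFac r m = 0 := by
  rw [fallFac_eq_eval, descPochhammer_eval_coe_nat_of_lt h]

lemma Nat.choose_add_mul_descFactorial (h a s : ℕ) :
    h.choose (a + s) * (a + s).descFactorial a = h.descFactorial a * (h - a).choose s := by
  have := Nat.choose_mul (n := h) (Nat.le_add_right a s)
  rw [Nat.add_sub_cancel_left] at this
  rw [Nat.descFactorial_eq_factorial_mul_choose, Nat.descFactorial_eq_factorial_mul_choose,
    mul_left_comm, this]
  ring

lemma sum_choose_mul_fallFac_mul_fallFac (h a b : ℕ) (y k : ℝ) :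
    ∑ r ∈ range (h + 1), (h.choose r : ℝ) * (fallFac k r * fallFac (y - k) (h - r)) *
        (fallFac r a * fallFac (k - r) b)
      = fallFac h a * fallFac (y - a - b) (h - a) * fallFac k (a + b) := by
  rcases lt_or_ge h a with hha | hah
  · rw [fallFac_natCast_of_lt hha, zero_mul, zero_mul]
    refine sum_eq_zero fun r hr => ?_
    rw [fallFac_natCast_of_lt (by grind), zero_mul, mul_zero]
  obtain ⟨m, rfl⟩ := Nat.exists_eq_add_of_le hah
  have hsplit : ∀ s ∈ range (m + 1),
      ((a + m).choose (a + s) : ℝ) * (fallFac k ↑(a + s) * fallFac (y - k) (a + m - (a + s))) *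
          (fallFac ↑(a + s) a * fallFac (k - ↑(a + s)) b)
        = fallFac ↑(a + m) a * fallFac k (a + b) *
            ((m.choose s : ℝ) * (fallFac (k - a - b) s * fallFac (y - k) (m - s))) := by
    intro s _
    have hchoose : ((a + m).choose (a + s) : ℝ) * fallFac ↑(a + s) a
        = fallFac ↑(a + m) a * (m.choose s : ℝ) := by
      rw [fallFac_natCast, fallFac_natCast]
      have := Nat.choose_add_mul_descFactorial (a + m) a s
      rw [Nat.add_sub_cancel_left] at this
      exact_mod_cast this
    have hfall : fallFac k (a + s) * fallFac (k - ↑(a + s)) b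
        = fallFac k (a + b) * fallFac (k - a - b) s := by
      rw [← fallFac_add, add_right_comm, fallFac_add k (a + b)]
      rw [Nat.cast_add, sub_sub]
    rw [Nat.add_sub_add_left]
    linear_combination fallFac (y - k) (m - s) *
      (fallFac k (a + s) * fallFac (k - ↑(a + s)) b * hchoose +
        fallFac ↑(a + m) a * (m.choose s : ℝ) * hfall)
  rw [add_assoc, sum_range_add, sum_eq_zero fun r hr => by
      rw [fallFac_natCast_of_lt (mem_range.1 hr), zero_mul, mul_zero], zero_add,
    sum_congr rfl hsplit, ← mul_sum, ← fallFac_add_eq_sum_choose, Nat.add_sub_cancel_left,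
    show k - a - b + (y - k) = y - a - b by ring]
  ring

lemma degree_descPochhammer (R : Type*) [Ring R] [Nontrivial R] [NoZeroDivisors R] (n : ℕ) :
    (descPochhammer R n).degree = n := by
  rw [degree_eq_natDegree (monic_descPochhammer R n).ne_zero, descPochhammer_natDegree]

lemma Nat.cast_choose_eq_genBinom (r i : ℕ) : (r.choose i : ℝ) = genBinom r i := by
  rw [Nat.cast_choose_eq_descPochhammer_div, genBinom, fallFac_eq_eval]

lemma Polynomial.mul_mem_degreeLE {R : Type*} [Semiring R] {p q : R[X]} {m n : ℕ}
    (hp : p ∈ degreeLE R m) (hq : q ∈ degreeLE R n) : p * q ∈ degreeLE R ↑(m + n) := by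
  rw [mem_degreeLE] at *
  exact (degree_mul_le p q).trans (by push_cast; exact add_le_add hp hq)

noncomputable def binomialTransform (h : ℕ) (y : ℝ) : (ℕ → ℝ → ℝ) →ₗ[ℝ] ℝ → ℝ where
  toFun F k := ∑ r ∈ range (h + 1),
    (h.choose r : ℝ) * (fallFac k r * fallFac (y - k) (h - r)) * F r (k - r)
  map_add' F G := by
    ext k
    simp only [Pi.add_apply, mul_add, sum_add_distrib]
  map_smul' c F := by
    ext k
    simp only [Pi.smul_apply, smul_eq_mul, RingHom.id_apply, mul_sum]
    exact sum_congr rfl fun r _ => by ring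

noncomputable def polyFunDegreeLE (d : ℕ) : Submodule ℝ (ℝ → ℝ) :=
  (degreeLE ℝ d).map (LinearMap.pi leval)

noncomputable def fallFacSpan (d : ℕ) : Submodule ℝ (ℕ → ℝ → ℝ) :=
  Submodule.span ℝ {F | ∃ a b, a + b ≤ d ∧ F = fun (r : ℕ) x => fallFac r a * fallFac x b}

lemma binomialTransform_mem_polyFunDegreeLE (h : ℕ) (y : ℝ) {d : ℕ} {F : ℕ → ℝ → ℝ}
    (hF : F ∈ fallFacSpan d) : binomialTransform h y F ∈ polyFunDegreeLE d := by
  suffices fallFacSpan d ≤ (polyFunDegreeLE d).comap (binomialTransform h y) from this hF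
  refine Submodule.span_le.2 ?_
  rintro _ ⟨a, b, hab, rfl⟩
  refine ⟨(fallFac h a * fallFac (y - a - b) (h - a)) • descPochhammer ℝ (a + b), ?_, ?_⟩
  · exact degreeLE_mono (Nat.cast_le.2 hab)
      (Submodule.smul_mem _ _ (mem_degreeLE.2 (degree_descPochhammer ℝ _).le))
  · ext k
    simp only [LinearMap.pi_apply, leval_apply, eval_smul, smul_eq_mul, ← fallFac_eq_eval]
    exact (sum_choose_mul_fallFac_mul_fallFac h a b y k).symm

noncomputable def descPochhammerSeq : Polynomial.Sequence ℝ where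
  elems' := descPochhammer ℝ
  degree_eq' := degree_descPochhammer ℝ

noncomputable def evalMulEval : ℝ[X] →ₗ[ℝ] ℝ[X] →ₗ[ℝ] ℕ → ℝ → ℝ :=
  LinearMap.mk₂ ℝ (fun u v r x => u.eval (r : ℝ) * v.eval x)
    (fun _ _ _ => by ext; simp [add_mul]) (fun _ _ _ => by ext; simp [mul_assoc])
    (fun _ _ _ => by ext; simp [mul_add]) (fun _ _ _ => by ext; simp [mul_left_comm])

lemma evalMulEval_mem_fallFacSpan {u v : ℝ[X]} {du dv d : ℕ} (hu : u ∈ degreeLE ℝ du)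
    (hv : v ∈ degreeLE ℝ dv) (hd : du + dv ≤ d) : evalMulEval u v ∈ fallFacSpan d := by
  have hspan : ∀ m, Submodule.span ℝ (descPochhammer ℝ '' Set.Iic m) = degreeLE ℝ m := fun m =>
    descPochhammerSeq.span_degreeLE fun i _ => (monic_descPochhammer ℝ i).leadingCoeff ▸ isUnit_one
  rw [← hspan] at hu hv
  refine Submodule.map₂_le.1 ?_ u hu v hv
  rw [Submodule.map₂_span_span, Submodule.span_le]
  rintro _ ⟨_, ⟨a, ha, rfl⟩, _, ⟨b, hb, rfl⟩, rfl⟩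
  refine Submodule.subset_span ⟨a, b, by grind, ?_⟩
  ext r x
  simp [evalMulEval, fallFac_eq_eval]

noncomputable def genBinomPoly (i : ℕ) : ℝ[X] := (i.factorial : ℝ)⁻¹ • descPochhammer ℝ i

lemma eval_genBinomPoly (i : ℕ) (x : ℝ) : (genBinomPoly i).eval x = genBinom x i := by
  rw [genBinomPoly, eval_smul, smul_eq_mul, genBinom, fallFac_eq_eval, inv_mul_eq_div]

lemma genBinomPoly_mem_degreeLE (i : ℕ) : genBinomPoly i ∈ degreeLE ℝ i :=
  Submodule.smul_mem _ _ (mem_degreeLE.2 (degree_descPochhammer ℝ i).le)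

noncomputable def pFunPoly (α : ℕ → ℕ → ℝ) (t j : ℕ) : ℝ[X] :=
  ∑ i ∈ range (t - j + 1), α (i + j) j • genBinomPoly i

lemma eval_pFunPoly (α : ℕ → ℕ → ℝ) (t j : ℕ) (x : ℝ) :
    (pFunPoly α t j).eval x = pFun α t j x := by
  simp only [pFunPoly, pFun, eval_finsetSum, eval_smul, smul_eq_mul, eval_genBinomPoly]

lemma pFunPoly_mem_degreeLE (α : ℕ → ℕ → ℝ) (t j : ℕ) : pFunPoly α t j ∈ degreeLE ℝ ↑(t - j) :=
  Submodule.sum_mem _ fun i hi => Submodule.smul_mem _ _ <|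
    degreeLE_mono (Nat.cast_le.2 (by grind)) (genBinomPoly_mem_degreeLE i)

theorem stmt16_general (n t h : ℕ) (hht : h ≤ t) (α : ℕ → ℕ → ℝ) :
    ∃ q : Polynomial ℝ, q.natDegree ≤ 2 * t ∧ ∀ x : ℝ, Gfun n t h α x = q.eval x := by
  set F : ℕ → ℝ → ℝ := fun r x => (∑ j ∈ range (h + 1), (r.choose j : ℝ) * pFun α t j x) ^ 2
  have hG : Gfun n t h α = binomialTransform h n F := rfl
  have hF : F = ∑ j ∈ range (h + 1), ∑ j' ∈ range (h + 1),
      evalMulEval (genBinomPoly j * genBinomPoly j') (pFunPoly α t j * pFunPoly α t j') := by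
    ext r x
    simp only [F, sq, sum_mul_sum, Finset.sum_apply, evalMulEval, LinearMap.mk₂_apply, eval_mul,
      eval_genBinomPoly, eval_pFunPoly, Nat.cast_choose_eq_genBinom]
    exact sum_congr rfl fun j _ => sum_congr rfl fun j' _ => by ring
  have hFmem : F ∈ fallFacSpan (2 * t) := hF ▸ Submodule.sum_mem _ fun j hj =>
    Submodule.sum_mem _ fun j' hj' =>
      evalMulEval_mem_fallFacSpan
        (mul_mem_degreeLE (genBinomPoly_mem_degreeLE j) (genBinomPoly_mem_degreeLE j'))
        (mul_mem_degreeLE (pFunPoly_mem_degreeLE α t j) (pFunPoly_mem_degreeLE α t j')) (by grind)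
  obtain ⟨q, hq, hqG⟩ := binomialTransform_mem_polyFunDegreeLE h n hFmem
  exact ⟨q, natDegree_le_iff_degree_le.2 (mem_degreeLE.1 hq), fun x => hG ▸ (congrFun hqG x).symm⟩

/-- `G_h`, viewed as a univariate real polynomial, has degree at most
`2t` (the terms of degree exceeding `2t` cancel). -/
theorem stmt16 (n t h : ℕ) (hn : 1 ≤ n) (hht : h ≤ t) (α : ℕ → ℕ → ℝ) :
    ∃ q : Polynomial ℝ, q.natDegree ≤ 2 * t ∧ ∀ x : ℝ, Gfun n t h α x = q.eval x :=
  stmt16_general n t h hht α
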